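/- If 2n ≤ L, then P(σ(a) ∉ B for all a ∈ A) ≥ ∏_{i=0}^{n−1} (1 − m/(L − 2i − 1)). -/

import Mathlib

open Finset

/-- A perfect matching of `{1, …, L}`: a fixed-point-free involution of `Fin L`. -/
def FPFInvolution (L : ℕ) : Type := {σ : Equiv.Perm (Fin L) // ∀ x, σ (σ x) = x ∧ σ x ≠ x}

/-!
Condition on the partner `b = σ a` of a point `a ∈ A`. Matchings with `σ a = b` are matchings of
the `L - 2` remaining points, so each of the `L - 1 - m` admissible partners `b ∉ B ∪ {a}`
contributes, by induction, at least the product for `L - 2` points times the number of matchings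
of `L - 2` points, while there are `L - 1` times as many matchings of all `L` points. This yields
the factor `1 - m / (L - 1)`. The residual set `A \ {a, b}` may have lost two points, so the
induction is over `#A ≤ n`; once `A` is empty one needs the product to be at most `1`, which holds
although single factors can be very negative: large numerators pair off with denominators.
-/

open Equiv

theorem Nat.card_eq_sum_card_fiber {X Y : Type*} [Finite X] [Fintype Y] (f : X → Y) :
    Nat.card X = ∑ y, Nat.card {x // f x = y} := by
  rw [← Nat.card_congr (sigmaFiberEquiv f), Nat.card_sigma]

theorem Nat.card_subtype_eq_sum_card_fiber {X Y : Type*} [Finite X] [Fintype Y] (f : X → Y)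
    (p : X → Prop) : Nat.card {x // p x} = ∑ y, Nat.card {x // f x = y ∧ p x} := by
  rw [Nat.card_eq_sum_card_fiber fun x : {x // p x} => f x]
  refine sum_congr rfl fun y _ => Nat.card_congr ?_
  exact (subtypeSubtypeEquivSubtypeInter p (f · = y)).trans
    (subtypeEquivRight fun _ => and_comm)

theorem Nat.sum_card_fiber_le_card_subtype {X Y : Type*} [Finite X] [Fintype Y] (f : X → Y)
    (p : X → Prop) (s : Finset Y) :
    ∑ y ∈ s, Nat.card {x // f x = y ∧ p x} ≤ Nat.card {x // p x} := by
  rw [Nat.card_subtype_eq_sum_card_fiber f p]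
  exact sum_le_sum_of_subset (subset_univ s)

namespace Finset

variable {α : Type*} {p : α → Prop} [DecidablePred p] {s t : Finset α}

theorem card_subtype_lt {a : α} (ha : a ∈ s) (hpa : ¬p a) : #(s.subtype p) < #s := by
  rw [card_subtype]
  exact card_lt_card (filter_ssubset.2 ⟨a, ha, hpa⟩)

theorem card_subtype_of_forall (h : ∀ x ∈ s, p x) : #(s.subtype p) = #s := by
  rw [card_subtype, filter_true_of_mem h]

theorem disjoint_subtype (h : Disjoint s t) (p : α → Prop) [DecidablePred p] :
    Disjoint (s.subtype p) (t.subtype p) :=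
  disjoint_left.2 fun _ hs ht => disjoint_left.1 h (mem_subtype.1 hs) (mem_subtype.1 ht)

end Finset

theorem prod_abs_sub_le_prod {k L m : ℕ} (hk : 2 * k ≤ L) (hm : m ≤ L) :
    ∏ i ∈ range k, |(L : ℝ) - m - 2 * i - 1| ≤ ∏ i ∈ range k, ((L : ℝ) - 2 * i - 1) := by
  induction k generalizing L m with
  | zero => simp
  | succ k ih =>
    by_cases hsmall : m + 2 * k + 1 ≤ L
    · refine prod_le_prod (fun _ _ => abs_nonneg _) fun i hi => ?_
      have hi : m + 2 * i + 1 ≤ L := by rw [mem_range] at hi; omega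
      have hi' : ((m + 2 * i + 1 : ℕ) : ℝ) ≤ L := by exact_mod_cast hi
      push_cast at hi'
      rw [abs_of_nonneg (by linarith)]
      linarith [(m.cast_nonneg : (0 : ℝ) ≤ m)]
    -- Now `m ≥ 2`: the last numerator is at most the first denominator, and the other
    -- numerators and denominators are those of `(L - 2, m - 2)`.
    obtain ⟨L, rfl⟩ : ∃ L', L = L' + 2 := ⟨L - 2, by omega⟩
    obtain ⟨m, rfl⟩ : ∃ m', m = m' + 2 := ⟨m - 2, by omega⟩
    rw [prod_range_succ, prod_range_succ']
    push_cast
    have hrest : ∏ i ∈ range k, |(L : ℝ) + 2 - (m + 2) - 2 * i - 1| ≤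
        ∏ i ∈ range k, ((L : ℝ) + 2 - 2 * (i + 1) - 1) := by
      convert ih (L := L) (m := m) (by omega) (by omega) using 3 <;> ring
    have hlast : |(L : ℝ) + 2 - (m + 2) - 2 * k - 1| ≤ (L : ℝ) + 2 - 2 * 0 - 1 := by
      have hkL : ((2 * k : ℕ) : ℝ) ≤ L := by exact_mod_cast (by omega : 2 * k ≤ L)
      have hmL : (m : ℝ) ≤ L := by exact_mod_cast (by omega : m ≤ L)
      push_cast at hkL
      rw [abs_le]
      constructor <;> linarith [(k.cast_nonneg : (0 : ℝ) ≤ k), (m.cast_nonneg : (0 : ℝ) ≤ m)]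
    refine mul_le_mul hrest hlast (abs_nonneg _) (prod_nonneg fun i hi => ?_)
    have hiL : ((2 * i + 1 : ℕ) : ℝ) ≤ L := by
      rw [mem_range] at hi; exact_mod_cast (by omega : 2 * i + 1 ≤ L)
    push_cast at hiL
    linarith

theorem prod_one_sub_div_le_one {k L m : ℕ} (hk : 2 * k ≤ L) (hm : m ≤ L) :
    ∏ i ∈ range k, (1 - (m : ℝ) / ((L : ℝ) - 2 * i - 1)) ≤ 1 := by
  have hpos : ∀ i ∈ range k, (0 : ℝ) < (L : ℝ) - 2 * i - 1 := fun i hi => by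
    have : ((2 * i + 2 : ℕ) : ℝ) ≤ L := by rw [mem_range] at hi; exact_mod_cast (by omega)
    push_cast at this
    linarith
  have hfactor : ∀ i ∈ range k, 1 - (m : ℝ) / ((L : ℝ) - 2 * i - 1) =
      ((L : ℝ) - m - 2 * i - 1) / ((L : ℝ) - 2 * i - 1) := fun i hi => by
    field_simp [(hpos i hi).ne']
    ring
  rw [prod_congr rfl hfactor, prod_div_distrib, div_le_one (prod_pos hpos)]
  exact (le_abs_self _).trans ((abs_prod _ _).trans_le (prod_abs_sub_le_prod hk hm))

theorem prod_one_sub_div_mul_succ (L m k : ℕ) :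
    (∏ i ∈ range (k + 1), (1 - (m : ℝ) / ((L : ℝ) + 2 - 2 * i - 1))) * (L + 1) =
      (L + 1 - m) * ∏ i ∈ range k, (1 - (m : ℝ) / ((L : ℝ) - 2 * i - 1)) := by
  have hshift : ∏ i ∈ range k, (1 - (m : ℝ) / ((L : ℝ) + 2 - 2 * ((i + 1 : ℕ) : ℝ) - 1)) =
      ∏ i ∈ range k, (1 - (m : ℝ) / ((L : ℝ) - 2 * i - 1)) :=
    prod_congr rfl fun i _ => by push_cast; ring_nf
  have hL : (L : ℝ) + 1 ≠ 0 := by positivity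
  rw [prod_range_succ', hshift, show (L : ℝ) + 2 - 2 * ((0 : ℕ) : ℝ) - 1 = L + 1 by simp; ring]
  field_simp

abbrev FixedPointFreeInvolution (α : Type*) : Type _ :=
  {σ : Perm α // ∀ x, σ (σ x) = x ∧ σ x ≠ x}

namespace FixedPointFreeInvolution

variable {α β : Type*}

def congr (e : α ≃ β) : FixedPointFreeInvolution α ≃ FixedPointFreeInvolution β :=
  e.permCongr.subtypeEquiv fun σ => by
    refine ⟨fun h y => ?_, fun h x => ?_⟩
    · simpa [permCongr_apply, ← e.eq_symm_apply] using h (e.symm y)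
    · simpa [permCongr_apply, ← e.eq_symm_apply] using h (e x)

theorem card_eq_of_card_eq [Fintype α] [Fintype β] (h : Fintype.card α = Fintype.card β) :
    Nat.card (FixedPointFreeInvolution α) = Nat.card (FixedPointFreeInvolution β) :=
  Nat.card_congr (congr (Fintype.equivOfCardEq h))

theorem nonempty_of_even_card [Fintype α] (h : Even (Fintype.card α)) :
    Nonempty (FixedPointFreeInvolution α) := by
  obtain ⟨d, hd⟩ := h
  let e : α ≃ Fin d ⊕ Fin d := Fintype.equivOfCardEq (by simp [hd])
  exact ⟨congr e.symm ⟨sumComm _ _, fun x => ⟨by cases x <;> rfl, by cases x <;> simp⟩⟩⟩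

theorem apply_apply (σ : FixedPointFreeInvolution α) (x : α) : σ.1 (σ.1 x) = x := (σ.2 x).1

variable {a b : α}

theorem apply_eq_of_apply_eq (σ : FixedPointFreeInvolution α) {x y : α} (h : σ.1 x = y) :
    σ.1 y = x := by
  rw [← h, apply_apply]

theorem apply_ne_and_ne_iff (σ : FixedPointFreeInvolution α) (h : σ.1 a = b) (x : α) :
    σ.1 x ≠ a ∧ σ.1 x ≠ b ↔ x ≠ a ∧ x ≠ b := by
  have hb := apply_eq_of_apply_eq σ h
  have ha_iff : σ.1 x = a ↔ x = b :=
    ⟨fun hx => by rw [← apply_apply σ x, hx, h], fun hx => by rw [hx, hb]⟩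
  have hb_iff : σ.1 x = b ↔ x = a :=
    ⟨fun hx => by rw [← apply_apply σ x, hx, hb], fun hx => by rw [hx, h]⟩
  simp only [ne_eq, ha_iff, hb_iff, and_comm]

section Pair

variable [DecidableEq α]

def extendPair (a b : α) (τ : Perm {x // x ≠ a ∧ x ≠ b}) : Perm α :=
  swap a b * Perm.ofSubtype τ

theorem extendPair_apply_left (τ : Perm {x // x ≠ a ∧ x ≠ b}) : extendPair a b τ a = b := by
  simp [extendPair, Perm.ofSubtype_apply_of_not_mem]

theorem extendPair_apply_right (τ : Perm {x // x ≠ a ∧ x ≠ b}) : extendPair a b τ b = a := by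
  simp [extendPair, Perm.ofSubtype_apply_of_not_mem]

theorem extendPair_apply_coe (τ : Perm {x // x ≠ a ∧ x ≠ b}) (x : {x // x ≠ a ∧ x ≠ b}) :
    extendPair a b τ x = τ x := by
  rw [extendPair, Perm.mul_apply, Perm.ofSubtype_apply_coe]
  exact swap_apply_of_ne_of_ne (τ x).2.1 (τ x).2.2

def restrictPair (hab : a ≠ b) :
    {σ : FixedPointFreeInvolution α // σ.1 a = b} ≃
      FixedPointFreeInvolution {x // x ≠ a ∧ x ≠ b} where
  toFun σ := ⟨σ.1.1.subtypePerm (apply_ne_and_ne_iff σ.1 σ.2),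
    fun x => ⟨Subtype.ext (apply_apply σ.1 x), fun h => (σ.1.2 x).2 (congrArg Subtype.val h)⟩⟩
  invFun τ := ⟨⟨extendPair a b τ.1, fun x => by
      by_cases hxa : x = a
      · subst hxa; simp [extendPair_apply_left, extendPair_apply_right, hab.symm]
      by_cases hxb : x = b
      · subst hxb; simp [extendPair_apply_left, extendPair_apply_right, hab]
      obtain ⟨y, rfl⟩ : ∃ y : {x // x ≠ a ∧ x ≠ b}, y.1 = x := ⟨⟨x, hxa, hxb⟩, rfl⟩
      rw [extendPair_apply_coe, extendPair_apply_coe, apply_apply τ]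
      exact ⟨rfl, fun h => (τ.2 y).2 (Subtype.ext h)⟩⟩, extendPair_apply_left _⟩
  left_inv σ := by
    refine Subtype.ext (Subtype.ext (Equiv.ext fun x => ?_))
    by_cases hxa : x = a
    · subst hxa; simp [extendPair_apply_left, σ.2]
    by_cases hxb : x = b
    · subst hxb; simp [extendPair_apply_right, apply_eq_of_apply_eq σ.1 σ.2]
    exact extendPair_apply_coe _ ⟨x, hxa, hxb⟩
  right_inv τ := Subtype.ext (Equiv.ext fun x => Subtype.ext (extendPair_apply_coe _ x))

theorem restrictPair_apply_coe (hab : a ≠ b) (σ : {σ : FixedPointFreeInvolution α // σ.1 a = b})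
    (x : {x // x ≠ a ∧ x ≠ b}) : ((restrictPair hab σ).1 x : α) = σ.1.1 x := rfl

theorem card_subtype_ne_and_ne [Fintype α] (hab : a ≠ b) :
    Fintype.card {x // x ≠ a ∧ x ≠ b} = Fintype.card α - 2 := by
  have h : univ.filter (fun x => x ≠ a ∧ x ≠ b) = (univ.erase a).erase b := by
    ext x; simp [and_comm]
  rw [Fintype.card_subtype, h, card_erase_of_mem (mem_erase.2 ⟨hab.symm, mem_univ b⟩),
    card_erase_of_mem (mem_univ a), card_univ]
  omega

theorem card_avoiding_fiber (A B : Finset α) (hab : a ≠ b) (haB : a ∉ B) (hbB : b ∉ B) :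
    Nat.card {σ : FixedPointFreeInvolution α // σ.1 a = b ∧ ∀ x ∈ A, σ.1 x ∉ B} =
      Nat.card {τ : FixedPointFreeInvolution {x // x ≠ a ∧ x ≠ b} //
        ∀ x ∈ A.subtype (fun x => x ≠ a ∧ x ≠ b), τ.1 x ∉ B.subtype (fun x => x ≠ a ∧ x ≠ b)} := by
  refine Nat.card_congr <| (subtypeSubtypeEquivSubtypeInter _ _).symm.trans <|
    (restrictPair hab).subtypeEquiv fun σ => ?_
  simp only [mem_subtype, restrictPair_apply_coe, Subtype.forall]
  refine ⟨fun h x _ hxA => h x hxA, fun h x hxA => ?_⟩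
  by_cases hxa : x = a
  · rw [hxa, σ.2]; exact hbB
  by_cases hxb : x = b
  · rw [hxb, apply_eq_of_apply_eq σ.1 σ.2]; exact haB
  exact h x ⟨hxa, hxb⟩ hxA

end Pair

section Fintype

variable [Fintype α] [DecidableEq α]

theorem card_eq_succ_mul {L : ℕ} (hα : Fintype.card α = L + 2) (a : α) :
    Nat.card (FixedPointFreeInvolution α) =
      (L + 1) * Nat.card (FixedPointFreeInvolution (Fin L)) := by
  have hfiber (b : α) (hb : b ≠ a) : Nat.card {σ : FixedPointFreeInvolution α // σ.1 a = b} =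
      Nat.card (FixedPointFreeInvolution (Fin L)) := by
    rw [Nat.card_congr (restrictPair hb.symm)]
    exact card_eq_of_card_eq (by rw [card_subtype_ne_and_ne hb.symm, hα, Fintype.card_fin]; rfl)
  have hself : Nat.card {σ : FixedPointFreeInvolution α // σ.1 a = a} = 0 :=
    haveI : IsEmpty {σ : FixedPointFreeInvolution α // σ.1 a = a} := ⟨fun σ => (σ.1.2 a).2 σ.2⟩
    Nat.card_of_isEmpty
  rw [Nat.card_eq_sum_card_fiber fun σ : FixedPointFreeInvolution α => σ.1 a,
    ← sum_erase_add _ _ (mem_univ a), hself, add_zero,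
    sum_congr rfl fun b hb => hfiber b (ne_of_mem_erase hb), sum_const,
    card_erase_of_mem (mem_univ a), card_univ, hα, smul_eq_mul]
  rfl

theorem prod_mul_card_le_card_avoiding (A B : Finset α) (hAB : Disjoint A B) {k : ℕ}
    (hA : #A ≤ k) (hk : 2 * k ≤ Fintype.card α) :
    (∏ i ∈ range k, (1 - (#B : ℝ) / ((Fintype.card α : ℝ) - 2 * i - 1))) *
        Nat.card (FixedPointFreeInvolution α) ≤
      Nat.card {σ : FixedPointFreeInvolution α // ∀ x ∈ A, σ.1 x ∉ B} := by
  induction k generalizing α with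
  | zero =>
    obtain rfl := card_eq_zero.1 (Nat.le_zero.1 hA)
    simp
  | succ k ih =>
    rcases A.eq_empty_or_nonempty with rfl | ⟨a, ha⟩
    · simpa using mul_le_of_le_one_left (Nat.cast_nonneg _)
        (prod_one_sub_div_le_one hk (card_le_univ B))
    have haB : a ∉ B := disjoint_left.1 hAB ha
    obtain ⟨L, hL⟩ : ∃ L, Fintype.card α = L + 2 := ⟨Fintype.card α - 2, by omega⟩
    set T := Nat.card (FixedPointFreeInvolution (Fin L))
    set P := ∏ i ∈ range k, (1 - (#B : ℝ) / ((L : ℝ) - 2 * i - 1))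
    have hfiber (b : α) (hb : b ∈ (insert a B)ᶜ) :
        P * T ≤ Nat.card {σ : FixedPointFreeInvolution α // σ.1 a = b ∧ ∀ x ∈ A, σ.1 x ∉ B} := by
      obtain ⟨hba, hbB⟩ : b ≠ a ∧ b ∉ B := by simpa using hb
      let p : α → Prop := fun x => x ≠ a ∧ x ≠ b
      have hcard : Fintype.card {x // p x} = L := by rw [card_subtype_ne_and_ne hba.symm, hL]; rfl
      have hA' : #(A.subtype p) ≤ k := by
        have := card_subtype_lt ha (fun h : p a => h.1 rfl)
        omega
      have hB' : #(B.subtype p) = #B := card_subtype_of_forall fun x hx =>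
        ⟨ne_of_mem_of_not_mem hx haB, ne_of_mem_of_not_mem hx hbB⟩
      have h := ih (A.subtype p) (B.subtype p) (disjoint_subtype hAB p) hA' (by rw [hcard]; omega)
      rw [hcard, hB', card_eq_of_card_eq (hcard.trans (Fintype.card_fin L).symm)] at h
      rwa [card_avoiding_fiber A B hba.symm haB hbB]
    have hcompl : (#(insert a B)ᶜ : ℝ) = L + 1 - #B := by
      have hle : #(insert a B) ≤ L + 2 := hL ▸ card_le_univ _
      rw [card_compl, hL, Nat.cast_sub hle, card_insert_of_notMem haB]
      push_cast; ring
    calc _ = ((L : ℝ) + 1 - #B) * P * T := by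
          rw [card_eq_succ_mul hL a, hL, ← prod_one_sub_div_mul_succ]; push_cast; ring
      _ = ∑ _b ∈ (insert a B)ᶜ, P * T := by rw [sum_const, nsmul_eq_mul, hcompl, mul_assoc]
      _ ≤ ∑ b ∈ (insert a B)ᶜ, (Nat.card {σ : FixedPointFreeInvolution α //
            σ.1 a = b ∧ ∀ x ∈ A, σ.1 x ∉ B} : ℝ) := sum_le_sum hfiber
      _ ≤ _ := by exact_mod_cast Nat.sum_card_fiber_le_card_subtype _ _ _

end Fintype

end FixedPointFreeInvolution

theorem matching_avoid_lower_bound_general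
    (L : ℕ) (hL : Even L)
    (A B : Finset (Fin L)) (hAB : Disjoint A B)
    (n m : ℕ) (hA : A.card = n) (hB : B.card = m)
    (h2n : 2 * n ≤ L) :
    (∏ i ∈ range n, (1 - (m : ℝ) / ((L : ℝ) - 2 * i - 1)))
      ≤ ((Nat.card {σ : FPFInvolution L // ∀ a ∈ A, σ.1 a ∉ B}) : ℝ)
          / ((Nat.card (FPFInvolution L)) : ℝ) := by
  have hpos : (0 : ℝ) < Nat.card (FPFInvolution L) := by
    have := FixedPointFreeInvolution.nonempty_of_even_card (α := Fin L) (by simpa using hL)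
    exact_mod_cast Nat.card_pos (α := FixedPointFreeInvolution (Fin L))
  rw [le_div_iff₀ hpos, ← hB]
  have h := FixedPointFreeInvolution.prod_mul_card_le_card_avoiding A B hAB hA.le
    (by rwa [Fintype.card_fin])
  rwa [Fintype.card_fin] at h

/-- **Lower bound for avoidance probabilities of a uniform random perfect matching.**
Let `σ` be a uniformly random perfect matching (fixed-point-free involution) of `{1, …, L}`
(`L` even), and let `A`, `B` be disjoint subsets with `|A| = n`, `|B| = m`.  If `2n ≤ L`,
then `P(σ(a) ∉ B for all a ∈ A) ≥ ∏_{i=0}^{n−1} (1 − m/(L − 2i − 1))`. -/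
theorem matching_avoid_lower_bound
    (L : ℕ) (hL : Even L) (hLpos : 0 < L)
    (A B : Finset (Fin L)) (hAB : Disjoint A B)
    (n m : ℕ) (hA : A.card = n) (hB : B.card = m)
    (h2n : 2 * n ≤ L) :
    (∏ i ∈ range n, (1 - (m : ℝ) / ((L : ℝ) - 2 * i - 1)))
      ≤ ((Nat.card {σ : FPFInvolution L // ∀ a ∈ A, σ.1 a ∉ B}) : ℝ)
          / ((Nat.card (FPFInvolution L)) : ℝ) :=
  matching_avoid_lower_bound_general L hL A B hAB n m hA hB h2n
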